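/- arXiv:1404.1806 — 4 statements merged into one kernel-verified Lean document; each statement's English description precedes it below -/
import Mathlib

section
/- For small categories C and D, the map φ : Tr(C) × Tr(D) → Tr(C × D) defined by φ([f],[g]) = [(f,g)] is a well-defined bijection; that is, the trace functor preserves finite products of categories. -/
open CategoryTheory

/-- The trace of a small category: equivalence classes of endomorphisms under
the relation generated by `f ≫ g ∼ g ≫ f` for `f : x ⟶ y`, `g : y ⟶ x`. -/
def TrS (C : Type*) [Category C] : Type _ :=
  Quot (fun p q : Σ x : C, (x ⟶ x) =>
    ∃ (x y : C) (f : x ⟶ y) (g : y ⟶ x), p = ⟨x, f ≫ g⟩ ∧ q = ⟨y, g ≫ f⟩)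

/-- The class `[f]` of an endomorphism in the trace. -/
def trS {C : Type*} [Category C] (x : C) (f : x ⟶ x) : TrS C :=
  Quot.mk _ ⟨x, f⟩

section Aux

variable {C D : Type*} [Category C] [Category D]

/-- Forward map on representatives. -/
def trProdTo : TrS C → TrS D → TrS (C × D) := by
  refine Quot.lift (fun p => Quot.lift (fun q => trS (p.1, q.1) (p.2, q.2)) ?_) ?_
  · rintro _ _ ⟨x, y, f, g, rfl, rfl⟩
    exact Quot.sound ⟨(p.1, x), (p.1, y), (p.2, f), (𝟙 p.1, g), by simp [trS], by simp [trS]⟩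
  · rintro _ _ ⟨x, y, f, g, rfl, rfl⟩
    funext q
    induction q using Quot.ind with
    | _ q =>
      exact Quot.sound ⟨(x, q.1), (y, q.1), (f, q.2), (g, 𝟙 q.1), by simp [trS], by simp [trS]⟩

/-- Backward map. -/
def trProdInv : TrS (C × D) → TrS C × TrS D := by
  refine Quot.lift (fun p => (trS p.1.1 p.2.1, trS p.1.2 p.2.2)) ?_
  rintro _ _ ⟨x, y, f, g, rfl, rfl⟩
  exact Prod.ext (Quot.sound ⟨x.1, y.1, f.1, g.1, rfl, rfl⟩)
    (Quot.sound ⟨x.2, y.2, f.2, g.2, rfl, rfl⟩)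

end Aux

/-- The trace functor preserves finite products: the map
`φ : Tr(C) × Tr(D) → Tr(C × D)`, `φ([f],[g]) = [(f,g)]`, is a well-defined bijection. -/
theorem trS_prod {C D : Type*} [Category C] [Category D] :
    ∃ φ : TrS C × TrS D ≃ TrS (C × D),
      ∀ (x : C) (y : D) (f : x ⟶ x) (g : y ⟶ y),
        φ (trS x f, trS y g) = trS (x, y) ((f, g) : (x, y) ⟶ (x, y)) := by
  refine ⟨⟨fun p => trProdTo p.1 p.2, trProdInv, ?_, ?_⟩, fun x y f g => rfl⟩
  · rintro ⟨a, b⟩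
    induction a using Quot.ind with
    | _ a =>
      induction b using Quot.ind with
      | _ b => rfl
  · intro a
    induction a using Quot.ind with
    | _ a => rfl
end

section
/- In an additive category C, for endomorphisms f : x → x and g : y → y, the identity [f ⊕ g] = [f] + [g] holds in the trace Tr(C). -/
open CategoryTheory

/-- The direct sum of all endomorphism groups of a small preadditive (linear) category. -/
noncomputable abbrev EndSum (C : Type*) [Category C] [Preadditive C] : Type _ :=
  DirectSum C (fun x : C => x ⟶ x)

/-- The element of `EndSum C` supported at `x` with value `f : x ⟶ x`. -/
noncomputable def ofEnd {C : Type*} [Category C] [Preadditive C] (x : C) (f : x ⟶ x) :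
    EndSum C :=
  letI := Classical.decEq C
  DirectSum.of (fun x : C => x ⟶ x) x f

/-- The subgroup of `⊕ₓ End(x)` spanned by all commutators `fg - gf`. -/
noncomputable def traceRel (C : Type*) [Category C] [Preadditive C] : AddSubgroup (EndSum C) :=
  AddSubgroup.closure
    { z | ∃ (x y : C) (f : x ⟶ y) (g : y ⟶ x), z = ofEnd x (f ≫ g) - ofEnd y (g ≫ f) }

/-- The trace `Tr(C) = (⊕ₓ End(x)) / span{fg - gf}` of a linear category. -/
noncomputable def Tr (C : Type*) [Category C] [Preadditive C] : Type _ :=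
  EndSum C ⧸ traceRel C

noncomputable instance (C : Type*) [Category C] [Preadditive C] : AddCommGroup (Tr C) :=
  inferInstanceAs (AddCommGroup (EndSum C ⧸ traceRel C))

/-- The canonical projection onto the trace. -/
noncomputable def trMk {C : Type*} [Category C] [Preadditive C] : EndSum C →+ Tr C :=
  QuotientAddGroup.mk' (traceRel C)

/-- The class `[f]` in `Tr(C)` of an endomorphism `f : x ⟶ x`. -/
noncomputable def trClass {C : Type*} [Category C] [Preadditive C] (x : C) (f : x ⟶ x) :
    Tr C :=
  trMk (ofEnd x f)

open CategoryTheory.Limits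


private lemma trClass_comm {C : Type*} [Category C] [Preadditive C]
    {x y : C} (u : x ⟶ y) (v : y ⟶ x) :
    trClass x (u ≫ v) = trClass y (v ≫ u) := by
  unfold trClass trMk
  refine (QuotientAddGroup.mk'_eq_mk' _).mpr ⟨-(ofEnd x (u ≫ v) - ofEnd y (v ≫ u)),
    neg_mem (AddSubgroup.subset_closure ⟨x, y, u, v, rfl⟩),
    by abel⟩

private lemma ofEnd_add {C : Type*} [Category C] [Preadditive C] (x : C) (f g : x ⟶ x) :
    ofEnd x (f + g) = ofEnd x f + ofEnd x g := by
  unfold ofEnd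
  letI := Classical.decEq C
  exact map_add (DirectSum.of (fun x : C => x ⟶ x) x) f g

/-- In an additive category, `[f ⊕ g] = [f] + [g]` in the trace. -/
theorem trClass_biprod_map {C : Type*} [Category C] [Preadditive C] [HasBinaryBiproducts C]
    {x y : C} (f : x ⟶ x) (g : y ⟶ y) :
    trClass (x ⊞ y) (biprod.map f g) = trClass x f + trClass y g := by
  have h : biprod.map f g =
      biprod.fst ≫ f ≫ biprod.inl + biprod.snd ≫ g ≫ biprod.inr := by
    rw [biprod.map_eq]
  have h1 := trClass_comm (biprod.fst ≫ f) (biprod.inl : x ⟶ x ⊞ y)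
  have h2 := trClass_comm (biprod.snd ≫ g) (biprod.inr : y ⟶ x ⊞ y)
  simp only [Category.assoc, biprod.inl_fst_assoc, biprod.inr_snd_assoc] at h1 h2
  rw [h, show trClass (x ⊞ y) (biprod.fst ≫ f ≫ biprod.inl + biprod.snd ≫ g ≫ biprod.inr)
      = trClass (x ⊞ y) (biprod.fst ≫ f ≫ biprod.inl)
        + trClass (x ⊞ y) (biprod.snd ≫ g ≫ biprod.inr) from by
      unfold trClass; rw [ofEnd_add, map_add],
    h1, h2]
end

section
/- The canonical fully faithful functor ι : C → Kar(C) from a small linear category C into its Karoubi envelope induces an isomorphism of abelian groups Tr(C) ≅ Tr(Kar(C)). -/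
open CategoryTheory

open CategoryTheory.Idempotents

section Aux

variable {C : Type*} [Category C] [Preadditive C]

/-- `ofEnd` bundled as an `AddMonoidHom`. -/
noncomputable def ofEndHom (x : C) : (x ⟶ x) →+ EndSum C :=
  letI := Classical.decEq C
  DirectSum.of (fun x : C => x ⟶ x) x

lemma ofEndHom_apply (x : C) (f : x ⟶ x) : ofEndHom x f = ofEnd x f := rfl

/-- The forward map on direct sums, induced by `toKaroubi`. -/
noncomputable def psi : EndSum C →+ EndSum (Karoubi C) :=
  letI := Classical.decEq C
  DirectSum.toAddMonoid (fun x =>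
    (ofEndHom ((toKaroubi C).obj x)).comp ((toKaroubi C).mapAddHom))

/-- The backward map on direct sums, `f : P ⟶ P` goes to `f.f : P.X ⟶ P.X`. -/
noncomputable def chi : EndSum (Karoubi C) →+ EndSum C :=
  letI := Classical.decEq C
  letI := Classical.decEq (Karoubi C)
  DirectSum.toAddMonoid (fun P =>
    (ofEndHom P.X).comp (AddMonoidHom.mk' (fun f : P ⟶ P => f.f) (fun _ _ => rfl)))

lemma psi_of (x : C) (f : x ⟶ x) :
    psi (ofEnd x f) = ofEnd ((toKaroubi C).obj x) ((toKaroubi C).map f) := by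
  letI := Classical.decEq C
  exact DirectSum.toAddMonoid_of
    (fun x => (ofEndHom ((toKaroubi C).obj x)).comp ((toKaroubi C).mapAddHom)) x f

lemma chi_of (P : Karoubi C) (f : P ⟶ P) :
    chi (ofEnd P f) = ofEnd P.X f.f := by
  letI := Classical.decEq C
  letI := Classical.decEq (Karoubi C)
  exact DirectSum.toAddMonoid_of
    (fun P : Karoubi C =>
      (ofEndHom P.X).comp (AddMonoidHom.mk' (fun f : P ⟶ P => f.f) (fun _ _ => rfl))) P f

lemma traceRel_le_comap_psi :
    traceRel C ≤ (traceRel (Karoubi C)).comap psi := by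
  rw [traceRel, AddSubgroup.closure_le]
  rintro z ⟨x, y, f, g, rfl⟩
  simp only [AddSubgroup.coe_comap, Set.mem_preimage, map_sub, psi_of, SetLike.mem_coe]
  apply AddSubgroup.subset_closure
  exact ⟨(toKaroubi C).obj x, (toKaroubi C).obj y, (toKaroubi C).map f, (toKaroubi C).map g,
    by rw [← Functor.map_comp, ← Functor.map_comp]⟩

lemma traceRel_le_comap_chi :
    traceRel (Karoubi C) ≤ (traceRel C).comap chi := by
  rw [traceRel, AddSubgroup.closure_le]
  rintro z ⟨P, Q, f, g, rfl⟩
  simp only [AddSubgroup.coe_comap, Set.mem_preimage, map_sub, chi_of, SetLike.mem_coe]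
  apply AddSubgroup.subset_closure
  exact ⟨P.X, Q.X, f.f, g.f, rfl⟩

lemma trMk_eq_of_rel {D : Type*} [Category D] [Preadditive D] {a b : EndSum D}
    (h : a - b ∈ traceRel D) : trMk a = trMk b := by
  have h0 : trMk (a - b) = 0 := (QuotientAddGroup.eq_zero_iff (a - b)).2 h
  rw [map_sub, sub_eq_zero] at h0
  exact h0

/-- The key relation: the class of `f : P ⟶ P` in `Tr (Karoubi C)` equals
the class of `f.f` on `(toKaroubi C).obj P.X`. -/
lemma trClass_karoubi (P : Karoubi C) (f : P ⟶ P) :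
    trClass ((toKaroubi C).obj P.X) ((toKaroubi C).map f.f) = trClass P f := by
  apply trMk_eq_of_rel
  apply AddSubgroup.subset_closure
  refine ⟨(toKaroubi C).obj P.X, P,
    ⟨f.f, by simp [toKaroubi]⟩, ⟨P.p, by simp [toKaroubi]⟩, ?_⟩
  congr 1
  · congr 1
    apply Karoubi.hom_ext
    simp [toKaroubi]
  · congr 1
    apply Karoubi.hom_ext
    simp

end Aux

/-- The canonical functor `ι : C → Kar(C)` into the Karoubi envelope
induces an isomorphism of abelian groups `Tr(C) ≅ Tr(Kar(C))`, `[f] ↦ [ι(f)]`. -/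
theorem tr_karoubi {C : Type*} [Category C] [Preadditive C] :
    ∃ φ : Tr C ≃+ Tr (Karoubi C),
      ∀ (x : C) (f : x ⟶ x),
        φ (trClass x f) = trClass ((toKaroubi C).obj x) ((toKaroubi C).map f) := by
  classical
  let Φ : Tr C →+ Tr (Karoubi C) :=
    QuotientAddGroup.map (traceRel C) (traceRel (Karoubi C)) psi traceRel_le_comap_psi
  let Ψ : Tr (Karoubi C) →+ Tr C :=
    QuotientAddGroup.map (traceRel (Karoubi C)) (traceRel C) chi traceRel_le_comap_chi
  have hΦ : ∀ a : EndSum C, Φ (trMk a) = trMk (psi a) := fun a => rfl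
  have hΨ : ∀ a : EndSum (Karoubi C), Ψ (trMk a) = trMk (chi a) := fun a => rfl
  have left : ∀ q : Tr C, Ψ (Φ q) = q := by
    intro q
    induction q using QuotientAddGroup.induction_on with
    | H a =>
      show Ψ (Φ (trMk a)) = trMk a
      rw [hΦ, hΨ]
      have key : (chi.comp psi : EndSum C →+ EndSum C) = AddMonoidHom.id _ := by
        refine DirectSum.addHom_ext (fun x f => ?_)
        show chi (psi (ofEnd x f)) = ofEnd x f
        rw [psi_of, chi_of]
        rfl
      congr 1
      exact DFunLike.congr_fun key a
  have right : ∀ q : Tr (Karoubi C), Φ (Ψ q) = q := by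
    intro q
    induction q using QuotientAddGroup.induction_on with
    | H a =>
      show Φ (Ψ (trMk a)) = trMk a
      rw [hΨ, hΦ]
      have key : ((trMk.comp psi).comp chi : EndSum (Karoubi C) →+ Tr (Karoubi C)) = trMk := by
        refine DirectSum.addHom_ext (fun P f => ?_)
        show trMk (psi (chi (ofEnd P f))) = trMk (ofEnd P f)
        rw [chi_of, psi_of]
        exact trClass_karoubi P f
      exact DFunLike.congr_fun key a
  refine ⟨{ toFun := Φ, invFun := Ψ, left_inv := left, right_inv := right,
            map_add' := Φ.map_add }, fun x f => ?_⟩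
  show Φ (trMk (ofEnd x f)) = _
  rw [hΦ, psi_of]
  rfl
end

section
/- Let C be a small linear category and B ⊆ Ob(C) a subset such that every object of C is isomorphic to a finite direct sum of objects in B (in the additive sense, i.e. C is equivalent to the additive closure of the full subcategory on B). Then the inclusion of the full subcategory C|_B into C induces an isomorphism Tr(C|_B) ≅ Tr(C). -/
open CategoryTheory

open CategoryTheory.Limits

/-!
Let `∑ᵢ πᵢ ≫ ιᵢ = 𝟙 x` exhibit each `x : C` as a retract of a sum of objects `bᵢ ∈ B`. The
inverse of the map induced by the inclusion sends `[f]` to `∑ᵢ [ιᵢ ≫ f ≫ πᵢ]`, computed in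
`C|_B`. This is compatible with the trace relations because, after inserting such a
decomposition of the identity between `f` and `g`, the two sides of `[f ≫ g] = [g ≫ f]` differ
by a reindexing of a double sum of cyclically rotated terms. Both composites are the identity by
cyclicity again: `∑ᵢ [ιᵢ ≫ f ≫ πᵢ] = [f ≫ ∑ᵢ πᵢ ≫ ιᵢ] = [f]`.
-/

namespace Tr

variable {C : Type*} [Category C] [Preadditive C]

lemma trClass_add (x : C) (f g : x ⟶ x) : trClass x (f + g) = trClass x f + trClass x g := by
  simp only [trClass, ofEnd, map_add]

noncomputable def trClassHom (x : C) : (x ⟶ x) →+ Tr C :=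
  AddMonoidHom.mk' (trClass x) (trClass_add x)

@[simp]
lemma trClassHom_apply (x : C) (f : x ⟶ x) : trClassHom x f = trClass x f := rfl

lemma trClass_sum (x : C) {ι : Type*} (s : Finset ι) (f : ι → (x ⟶ x)) :
    trClass x (∑ i ∈ s, f i) = ∑ i ∈ s, trClass x (f i) :=
  map_sum (trClassHom x) f s

lemma trClass_comp_comm {x y : C} (f : x ⟶ y) (g : y ⟶ x) :
    trClass x (f ≫ g) = trClass y (g ≫ f) := by
  rw [trClass, trClass, ← sub_eq_zero, ← map_sub]
  exact (QuotientAddGroup.eq_zero_iff _).mpr (AddSubgroup.subset_closure ⟨x, y, f, g, rfl⟩)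

section Lift

variable {M : Type*} [AddCommGroup M] (F : ∀ x : C, (x ⟶ x) →+ M)
  (hF : ∀ (x y : C) (f : x ⟶ y) (g : y ⟶ x), F x (f ≫ g) = F y (g ≫ f))

noncomputable def lift : Tr C →+ M :=
  letI := Classical.decEq C
  QuotientAddGroup.lift (traceRel C) (DirectSum.toAddMonoid F) <| by
    refine (AddSubgroup.closure_le _).mpr ?_
    rintro _ ⟨x, y, f, g, rfl⟩
    simp [ofEnd, hF]

@[simp]
lemma lift_trClass (x : C) (f : x ⟶ x) : lift F hF (trClass x f) = F x f := by
  classical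
  exact DirectSum.toAddMonoid_of F x f

end Lift

lemma hom_ext {M : Type*} [AddCommGroup M] {φ ψ : Tr C →+ M}
    (h : ∀ (x : C) (f : x ⟶ x), φ (trClass x f) = ψ (trClass x f)) : φ = ψ := by
  classical
  exact QuotientAddGroup.addMonoidHom_ext _ (DirectSum.addHom_ext h)

section Map

variable {D : Type*} [Category D] [Preadditive D] (F : D ⥤ C) [F.Additive]

noncomputable def map : Tr D →+ Tr C :=
  lift (fun x => (trClassHom (F.obj x)).comp F.mapAddHom) fun x y f g => by
    simp [trClass_comp_comm]

@[simp]
lemma map_trClass (x : D) (f : x ⟶ x) : map F (trClass x f) = trClass (F.obj x) (F.map f) :=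
  lift_trClass _ _ x f

end Map

end Tr

/-- Weaker than a biproduct decomposition: nothing is required of `inc i ≫ proj j`. -/
structure RetractOfSum {C D : Type*} [Category C] [Category D] [Preadditive C]
    (F : D ⥤ C) (x : C) where
  n : ℕ
  obj : Fin n → D
  inc : ∀ i, F.obj (obj i) ⟶ x
  proj : ∀ i, x ⟶ F.obj (obj i)
  total : ∑ i, proj i ≫ inc i = 𝟙 x

namespace RetractOfSum

variable {C D : Type*} [Category C] [Category D] [Preadditive C] [Preadditive D]
  {F : D ⥤ C}

noncomputable def ofIsoBiproduct [HasFiniteBiproducts C] {x : C} {n : ℕ} (d : Fin n → D)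
    (e : x ≅ ⨁ fun i => F.obj (d i)) : RetractOfSum F x where
  n := n
  obj := d
  inc i := biproduct.ι (fun i => F.obj (d i)) i ≫ e.inv
  proj i := e.hom ≫ biproduct.π (fun i => F.obj (d i)) i
  total := by
    calc ∑ i, (e.hom ≫ biproduct.π _ i) ≫ biproduct.ι (fun i => F.obj (d i)) i ≫ e.inv
        = e.hom ≫ (∑ i, biproduct.π _ i ≫ biproduct.ι (fun i => F.obj (d i)) i) ≫ e.inv := by
          simp only [Preadditive.comp_sum, Preadditive.sum_comp, Category.assoc]
      _ = 𝟙 x := by simp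

variable [F.Additive] (hF : F.FullyFaithful)

noncomputable def traceSum {x : C} (R : RetractOfSum F x) (f : x ⟶ x) : Tr D :=
  ∑ i, trClass (R.obj i) (hF.preimage (R.inc i ≫ f ≫ R.proj i))

lemma traceSum_add {x : C} (R : RetractOfSum F x) (f g : x ⟶ x) :
    traceSum hF R (f + g) = traceSum hF R f + traceSum hF R g := by
  simp only [traceSum, ← Finset.sum_add_distrib, ← Tr.trClass_add]
  congr! 2
  exact hF.map_injective (by simp)

noncomputable def traceSumHom {x : C} (R : RetractOfSum F x) : (x ⟶ x) →+ Tr D :=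
  AddMonoidHom.mk' (traceSum hF R) (traceSum_add hF R)

lemma trClass_preimage_comp_eq_sum {x y : C} (R : RetractOfSum F x) (S : RetractOfSum F y)
    (f : x ⟶ y) (g : y ⟶ x) (i : Fin R.n) :
    trClass (R.obj i) (hF.preimage (R.inc i ≫ (f ≫ g) ≫ R.proj i)) =
      ∑ j, trClass (R.obj i) (hF.preimage (R.inc i ≫ f ≫ S.proj j) ≫
        hF.preimage (S.inc j ≫ g ≫ R.proj i)) := by
  have expand : R.inc i ≫ (f ≫ g) ≫ R.proj i =
      ∑ j, (R.inc i ≫ f ≫ S.proj j) ≫ (S.inc j ≫ g ≫ R.proj i) :=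
    calc R.inc i ≫ (f ≫ g) ≫ R.proj i
        = R.inc i ≫ f ≫ (∑ j, S.proj j ≫ S.inc j) ≫ g ≫ R.proj i := by
          rw [S.total, Category.id_comp, Category.assoc]
      _ = _ := by simp only [Preadditive.comp_sum, Preadditive.sum_comp, Category.assoc]
  simp_rw [expand, ← hF.preimage_comp, ← Tr.trClass_sum]
  congr 1
  exact hF.map_injective (by simp)

/-- Insert `𝟙 y = ∑ j, S.proj j ≫ S.inc j` between `f` and `g`, then move each term cyclically. -/
lemma traceSum_comp_comm {x y : C} (R : RetractOfSum F x) (S : RetractOfSum F y) (f : x ⟶ y)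
    (g : y ⟶ x) : traceSum hF R (f ≫ g) = traceSum hF S (g ≫ f) := by
  simp only [traceSum, trClass_preimage_comp_eq_sum hF R S, trClass_preimage_comp_eq_sum hF S R]
  rw [Finset.sum_comm]
  simp only [Tr.trClass_comp_comm]

lemma map_traceSum {x : C} (R : RetractOfSum F x) (f : x ⟶ x) :
    Tr.map F (traceSum hF R f) = trClass x f := by
  simp only [traceSum, map_sum, Tr.map_trClass, hF.map_preimage]
  simp only [Tr.trClass_comp_comm (R.inc _), ← Tr.trClass_sum, Category.assoc,
    ← Preadditive.comp_sum, R.total, Category.comp_id]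

lemma traceSum_map {d : D} (R : RetractOfSum F (F.obj d)) (f : d ⟶ d) :
    traceSum hF R (F.map f) = trClass d f := by
  have preimage_conj (i : Fin R.n) : hF.preimage (R.inc i ≫ F.map f ≫ R.proj i) =
      hF.preimage (R.inc i) ≫ f ≫ hF.preimage (R.proj i) := by simp
  simp only [traceSum, preimage_conj, Tr.trClass_comp_comm (hF.preimage (R.inc _)),
    ← Tr.trClass_sum, Category.assoc, ← Preadditive.comp_sum, ← hF.preimage_comp]
  have total : ∑ i, hF.preimage (R.proj i ≫ R.inc i) = 𝟙 d :=
    hF.map_injective (by simp [R.total])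
  rw [total, Category.comp_id]

end RetractOfSum

namespace Tr

variable {C D : Type*} [Category C] [Category D] [Preadditive C] [Preadditive D]
  {F : D ⥤ C} [F.Additive] (hF : F.FullyFaithful) (R : ∀ x, RetractOfSum F x)

noncomputable def mapInv : Tr C →+ Tr D :=
  lift (fun x => (R x).traceSumHom hF)
    fun x y f g => (R x).traceSum_comp_comm hF (R y) f g

@[simp]
lemma mapInv_trClass (x : C) (f : x ⟶ x) : mapInv hF R (trClass x f) = (R x).traceSum hF f :=
  lift_trClass _ _ x f

noncomputable def mapAddEquiv : Tr D ≃+ Tr C where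
  toFun := map F
  invFun := mapInv hF R
  left_inv := DFunLike.congr_fun (show (mapInv hF R).comp (map F) = .id _ from
    hom_ext fun d f => by simp [RetractOfSum.traceSum_map])
  right_inv := DFunLike.congr_fun (show (map F).comp (mapInv hF R) = .id _ from
    hom_ext fun x f => by simp [RetractOfSum.map_traceSum])
  map_add' := map_add (map F)

end Tr

/-- If every object of a linear category `C` is isomorphic to a finite
direct sum of objects from `B ⊆ Ob(C)`, then the inclusion of the full subcategory
`C|_B` induces an isomorphism `Tr(C|_B) ≅ Tr(C)`. -/
theorem tr_fullSubcategory {C : Type*} [Category C] [Preadditive C] [HasFiniteBiproducts C]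
    (B : Set C)
    (hB : ∀ x : C, ∃ (n : ℕ) (b : Fin n → C),
      (∀ i, b i ∈ B) ∧ Nonempty (x ≅ biproduct b)) :
    ∃ φ : Tr (ObjectProperty.FullSubcategory fun x => x ∈ B) ≃+ Tr C,
      ∀ (b : ObjectProperty.FullSubcategory fun x => x ∈ B) (f : b ⟶ b),
        φ (trClass b f) = trClass b.obj f.hom := by
  choose n b hb e using hB
  let R (x : C) : RetractOfSum (ObjectProperty.ι fun x => x ∈ B) x :=
    .ofIsoBiproduct (fun i => ⟨b x i, hb x i⟩) (e x).some
  exact ⟨Tr.mapAddEquiv (ObjectProperty.fullyFaithfulι _) R, fun d f => Tr.map_trClass _ d f⟩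
end
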